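/- Let G be a connected {P6, C5, K_{1,3}}-free graph containing an induced 6-cycle with vertex set N0. If x is a vertex at distance 1 from N0, then the subgraph induced by N(x) ∩ N0 is isomorphic either to P3 (a path on 3 vertices) or to 2K2 (two disjoint edges). -/

import Mathlib

open SimpleGraph Finset

/-- `G` contains an induced copy of `H`. -/
def HasInducedCopy {V W : Type*} (G : SimpleGraph V) (H : SimpleGraph W) : Prop :=
  ∃ f : W ↪ V, ∀ a b, G.Adj (f a) (f b) ↔ H.Adj a b

/-- The cycle on `ZMod n` (for `n ≥ 3`). -/
def cyc (n : ℕ) : SimpleGraph (ZMod n) where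
  Adj i j := i ≠ j ∧ (i = j + 1 ∨ j = i + 1)
  symm := ⟨fun i j h => ⟨h.1.symm, h.2.symm⟩⟩
  loopless := ⟨fun i h => h.1 rfl⟩

/-- Kite: diamond (K4 minus an edge) plus a pendant vertex adjacent to a degree-3 vertex. -/
def kite : SimpleGraph (Fin 5) :=
  SimpleGraph.fromEdgeSet {s(0,1), s(0,2), s(1,2), s(1,3), s(2,3), s(1,4)}

/-- Bull: triangle with two pendant edges at distinct vertices. -/
def bull : SimpleGraph (Fin 5) :=
  SimpleGraph.fromEdgeSet {s(0,1), s(0,2), s(1,2), s(0,3), s(1,4)}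

/-- Independent expansion of the cycle `C_n`. -/
def indExp (n : ℕ) (m : ZMod n → ℕ) : SimpleGraph (Σ i : ZMod n, Fin (m i)) where
  Adj x y := x.1 ≠ y.1 ∧ (x.1 = y.1 + 1 ∨ y.1 = x.1 + 1)
  symm := ⟨fun x y h => ⟨h.1.symm, h.2.symm⟩⟩
  loopless := ⟨fun x h => h.1 rfl⟩

/-- Complete expansion of the cycle `C_n`. -/
def compExp (n : ℕ) (m : ZMod n → ℕ) : SimpleGraph (Σ i : ZMod n, Fin (m i)) where
  Adj x y := (x.1 = y.1 ∧ x ≠ y) ∨ (x.1 ≠ y.1 ∧ (x.1 = y.1 + 1 ∨ y.1 = x.1 + 1))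
  symm := by
    constructor
    rintro x y (⟨h, hne⟩ | ⟨h, h2⟩)
    · exact Or.inl ⟨h.symm, hne.symm⟩
    · exact Or.inr ⟨h.symm, h2.symm⟩
  loopless := by constructor; rintro x (⟨_, hne⟩ | ⟨h, _⟩); exacts [hne rfl, h rfl]

/-- Distance from a vertex to a set of vertices. -/
noncomputable def distToSet {V : Type*} (G : SimpleGraph V) (S : Set V) (x : V) : ℕ :=
  sInf ((fun y => G.dist x y) '' S)

/-- Two disjoint edges. -/
def twoK2 : SimpleGraph (Fin 4) := SimpleGraph.fromEdgeSet {s(0,1), s(2,3)}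

/-!
Let `T ⊆ ℤ/6ℤ` index the vertices of the `C₆` adjacent to `x`. The cycle and `x` together induce
`C₆` with one vertex attached along `T`, so no rotation of `T` may contain one of four patterns:
an element `i` with `i ± 1 ∉ T` (a claw centred at `vᵢ`), three alternate elements (a claw centred
at `x`), opposite elements `i, i + 3` with `i + 4, i + 5 ∉ T` (a `C₅` through `x`), or an element
`i` with `i + 2, …, i + 5 ∉ T` (a `P₆` ending at `x`). A finite check shows that the only nonempty
such `T` are three consecutive elements, inducing `P₃`, and `{i, i + 1, i + 3, i + 4}`, inducing
`2K₂`.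
-/

instance (n : ℕ) : DecidableRel (cyc n).Adj :=
  fun i j => inferInstanceAs (Decidable (i ≠ j ∧ (i = j + 1 ∨ j = i + 1)))

instance (n : ℕ) : DecidableRel (pathGraph n).Adj :=
  fun _ _ => decidable_of_iff _ pathGraph_adj.symm

instance : DecidableRel twoK2.Adj :=
  fun a b => inferInstanceAs (Decidable ((s(a, b) = s(0, 1) ∨ s(a, b) = s(2, 3)) ∧ a ≠ b))

lemma hasInducedCopy_iff_isIndContained {V W : Type*} {G : SimpleGraph V} {H : SimpleGraph W} :
    HasInducedCopy G H ↔ H ⊴ G :=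
  ⟨fun ⟨f, hf⟩ => ⟨⟨f, hf _ _⟩⟩, fun ⟨f⟩ => ⟨f.toEmbedding, fun _ _ => f.map_rel_iff⟩⟩

namespace SimpleGraph

def attachVertex {W : Type*} (H : SimpleGraph W) (S : Set W) : SimpleGraph (Option W) where
  Adj
    | some a, some b => H.Adj a b
    | none, some b => b ∈ S
    | some a, none => a ∈ S
    | none, none => False
  symm := ⟨by rintro (_ | a) (_ | b) h <;> first | exact h | exact h.symm⟩
  loopless := ⟨by rintro (_ | a) h <;> first | exact h | exact H.loopless.irrefl a h⟩

variable {V W : Type*} {G : SimpleGraph V} {H : SimpleGraph W}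

@[simp] lemma attachVertex_adj_some_some {S : Set W} {a b : W} :
    (H.attachVertex S).Adj (some a) (some b) ↔ H.Adj a b := Iff.rfl

@[simp] lemma attachVertex_adj_none_some {S : Set W} {b : W} :
    (H.attachVertex S).Adj none (some b) ↔ b ∈ S := Iff.rfl

@[simp] lemma attachVertex_adj_some_none {S : Set W} {a : W} :
    (H.attachVertex S).Adj (some a) none ↔ a ∈ S := Iff.rfl

@[simp] lemma attachVertex_not_adj_none_none {S : Set W} :
    ¬ (H.attachVertex S).Adj none none := id

def Embedding.attachVertex (f : H ↪g G) {x : V} (hx : x ∉ Set.range f) :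
    H.attachVertex {w | G.Adj x (f w)} ↪g G where
  toFun a := a.elim x f
  inj' := by
    rintro (_ | a) (_ | b) h
    · rfl
    · exact absurd ⟨b, h.symm⟩ hx
    · exact absurd ⟨a, h⟩ hx
    · exact congrArg some (f.injective h)
  map_rel_iff' := by
    rintro (_ | a) (_ | b)
    · simp
    · rfl
    · exact G.adj_comm _ _
    · exact f.map_rel_iff

lemma Embedding.nonempty_iso_induce_of_eq_range (f : H ↪g G) {s : Set V} (hs : s = Set.range f) :
    Nonempty (G.induce s ≃g H) :=
  hs ▸ ⟨f.isoInduceRange.symm⟩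

end SimpleGraph

open SimpleGraph

def cycAddLeft (n : ℕ) (i : ZMod n) : cyc n ≃g cyc n where
  toEquiv := Equiv.addLeft i
  map_rel_iff' := by simp [cyc, add_assoc]

def pathGraph3EmbeddingCyc6 : pathGraph 3 ↪g cyc 6 :=
  ⟨⟨![0, 1, 2], by decide⟩,
    (show ∀ a b : Fin 3, (cyc 6).Adj (![0, 1, 2] a) (![0, 1, 2] b) ↔ (pathGraph 3).Adj a b
      by decide) _ _⟩

def twoK2EmbeddingCyc6 : twoK2 ↪g cyc 6 :=
  ⟨⟨![0, 1, 3, 4], by decide⟩,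
    (show ∀ a b : Fin 4, (cyc 6).Adj (![0, 1, 3, 4] a) (![0, 1, 3, 4] b) ↔ twoK2.Adj a b
      by decide) _ _⟩

section Obstructions

variable {T : Set (ZMod 6)}

lemma claw_isIndContained_of_isolated (h0 : 0 ∈ T) (h1 : 1 ∉ T) (h5 : 5 ∉ T) :
    completeBipartiteGraph (Fin 1) (Fin 3) ⊴ (cyc 6).attachVertex T := by
  refine ⟨⟨⟨Sum.elim (fun _ => some 0) ![none, some 1, some 5], by decide⟩, fun {a b} => ?_⟩⟩
  rcases a with a | a <;> rcases b with b | b <;> fin_cases a <;> fin_cases b <;>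
    simp [h0, h1, h5] <;> decide

lemma claw_isIndContained_of_alternating (h0 : 0 ∈ T) (h2 : 2 ∈ T) (h4 : 4 ∈ T) :
    completeBipartiteGraph (Fin 1) (Fin 3) ⊴ (cyc 6).attachVertex T := by
  refine ⟨⟨⟨Sum.elim (fun _ => none) ![some 0, some 2, some 4], by decide⟩, fun {a b} => ?_⟩⟩
  rcases a with a | a <;> rcases b with b | b <;> fin_cases a <;> fin_cases b <;>
    simp [h0, h2, h4] <;> decide

lemma cyc5_isIndContained (h0 : 0 ∈ T) (h3 : 3 ∈ T) (h4 : 4 ∉ T) (h5 : 5 ∉ T) :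
    cyc 5 ⊴ (cyc 6).attachVertex T := by
  refine ⟨⟨⟨fun k : ZMod 5 => ![none, some 0, some 5, some 4, some 3] k, by decide⟩,
    fun {a b} => ?_⟩⟩
  -- `fin_cases` would produce `Fin 5` literals, for which no `DecidableRel (cyc 5).Adj` is found
  have hZ5 : ∀ a : ZMod 5, a = 0 ∨ a = 1 ∨ a = 2 ∨ a = 3 ∨ a = 4 := by decide
  rcases hZ5 a with rfl | rfl | rfl | rfl | rfl <;>
    rcases hZ5 b with rfl | rfl | rfl | rfl | rfl <;> simp [h0, h3, h4, h5] <;> decide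

lemma pathGraph6_isIndContained (h0 : 0 ∈ T) (h2 : 2 ∉ T) (h3 : 3 ∉ T) (h4 : 4 ∉ T)
    (h5 : 5 ∉ T) : pathGraph 6 ⊴ (cyc 6).attachVertex T := by
  refine ⟨⟨⟨![some 2, some 3, some 4, some 5, some 0, none], by decide⟩, fun {a b} => ?_⟩⟩
  fin_cases a <;> fin_cases b <;> simp [h0, h2, h3, h4, h5] <;> decide

end Obstructions

set_option synthInstance.maxSize 2000 in
lemma Finset.exists_eq_image_of_cyc6_constraints (S : Finset (ZMod 6)) (hS : S.Nonempty)
    (isolated : ∀ i, i + 0 ∈ S → i + 1 ∉ S → i + 5 ∉ S → False)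
    (alternating : ∀ i, i + 0 ∈ S → i + 2 ∈ S → i + 4 ∈ S → False)
    (pentagon : ∀ i, i + 0 ∈ S → i + 3 ∈ S → i + 4 ∉ S → i + 5 ∉ S → False)
    (path : ∀ i, i + 0 ∈ S → i + 2 ∉ S → i + 3 ∉ S → i + 4 ∉ S → i + 5 ∉ S → False) :
    ∃ i, S = univ.image (i + pathGraph3EmbeddingCyc6 ·) ∨
      S = univ.image (i + twoK2EmbeddingCyc6 ·) := by
  revert S; decide

lemma exists_eq_range_of_not_isIndContained_attachVertex (T : Set (ZMod 6)) (hT : T.Nonempty)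
    (hClaw : ∀ i, ¬ completeBipartiteGraph (Fin 1) (Fin 3) ⊴ (cyc 6).attachVertex ((i + ·) ⁻¹' T))
    (hC5 : ∀ i, ¬ cyc 5 ⊴ (cyc 6).attachVertex ((i + ·) ⁻¹' T))
    (hP6 : ∀ i, ¬ pathGraph 6 ⊴ (cyc 6).attachVertex ((i + ·) ⁻¹' T)) :
    ∃ i, T = Set.range (i + pathGraph3EmbeddingCyc6 ·) ∨
      T = Set.range (i + twoK2EmbeddingCyc6 ·) := by
  obtain ⟨S, rfl⟩ := T.toFinite.exists_finset_coe
  obtain ⟨i, hS⟩ := S.exists_eq_image_of_cyc6_constraints (by simpa using hT)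
    (fun i h0 h1 h5 => hClaw i (claw_isIndContained_of_isolated h0 h1 h5))
    (fun i h0 h2 h4 => hClaw i (claw_isIndContained_of_alternating h0 h2 h4))
    (fun i h0 h3 h4 h5 => hC5 i (cyc5_isIndContained h0 h3 h4 h5))
    (fun i h0 h2 h3 h4 h5 => hP6 i (pathGraph6_isIndContained h0 h2 h3 h4 h5))
  exact ⟨i, by rcases hS with rfl | rfl <;> simp⟩

theorem stmt_6_general {V : Type*} (G : SimpleGraph V)
    (hP6 : ¬ HasInducedCopy G (pathGraph 6))
    (hC5 : ¬ HasInducedCopy G (cyc 5))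
    (hClaw : ¬ HasInducedCopy G (completeBipartiteGraph (Fin 1) (Fin 3)))
    (v : ZMod 6 → V) (hinj : Function.Injective v)
    (hC : ∀ i j, G.Adj (v i) (v j) ↔ (cyc 6).Adj i j)
    (x : V) (hx : x ∉ Set.range v) (hx1 : ∃ i, G.Adj x (v i)) :
    Nonempty (G.induce {y | y ∈ Set.range v ∧ G.Adj x y} ≃g pathGraph 3) ∨
    Nonempty (G.induce {y | y ∈ Set.range v ∧ G.Adj x y} ≃g twoK2) := by
  simp only [hasInducedCopy_iff_isIndContained] at hP6 hC5 hClaw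
  have hN : {y | y ∈ Set.range v ∧ G.Adj x y} = v '' {j | G.Adj x (v j)} :=
    Set.image_preimage_eq_range_inter.symm
  let c : cyc 6 ↪g G := ⟨⟨v, hinj⟩, hC _ _⟩
  let rotate (i : ZMod 6) : cyc 6 ↪g G := c.comp (cycAddLeft 6 i).toEmbedding
  have attach (i : ZMod 6) := (rotate i).attachVertex (x := x) fun ⟨j, hj⟩ => hx ⟨i + j, hj⟩
  obtain ⟨i, hT | hT⟩ := exists_eq_range_of_not_isIndContained_attachVertex
    {j | G.Adj x (v j)} hx1
    (fun i h => hClaw (h.trans ⟨attach i⟩)) (fun i h => hC5 (h.trans ⟨attach i⟩))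
    (fun i h => hP6 (h.trans ⟨attach i⟩))
  · exact .inl <| ((rotate i).comp pathGraph3EmbeddingCyc6).nonempty_iso_induce_of_eq_range <| by
      rw [hN, hT, ← Set.range_comp]; rfl
  · exact .inr <| ((rotate i).comp twoK2EmbeddingCyc6).nonempty_iso_induce_of_eq_range <| by
      rw [hN, hT, ← Set.range_comp]; rfl

theorem stmt_6 {V : Type*} [Fintype V] (G : SimpleGraph V) (hconn : G.Connected)
    (hP6 : ¬ HasInducedCopy G (pathGraph 6))
    (hC5 : ¬ HasInducedCopy G (cyc 5))
    (hClaw : ¬ HasInducedCopy G (completeBipartiteGraph (Fin 1) (Fin 3)))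
    (v : ZMod 6 → V) (hinj : Function.Injective v)
    (hC : ∀ i j, G.Adj (v i) (v j) ↔ (cyc 6).Adj i j)
    (x : V) (hx : x ∉ Set.range v) (hx1 : ∃ i, G.Adj x (v i)) :
    Nonempty (G.induce {y | y ∈ Set.range v ∧ G.Adj x y} ≃g pathGraph 3) ∨
    Nonempty (G.induce {y | y ∈ Set.range v ∧ G.Adj x y} ≃g twoK2) :=
  stmt_6_general G hP6 hC5 hClaw v hinj hC x hx hx1
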